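/- arXiv:1412.6658 — 3 statements merged into one kernel-verified Lean document; each statement's English description precedes it below -/
import Mathlib

section
/- Suppose F_1, F_2, F_{1|2}, F_{2|1} are differentiable at s = 1 with F_1(1) = F_2(1) = F_{1|2}(1) = F_{2|1}(1) = 1, derivatives μ_1, μ_2, μ_{1|2}, μ_{2|1} respectively, and μ_{1|2} + μ_{2|1} ≠ 0. Then lim_{s→1} (F_1(s) - F_2(s) F_{1|2}(s))/(1 - F_{1|2}(s) F_{2|1}(s)) = (μ_2 - μ_1 + μ_{1|2})/(μ_{1|2} + μ_{2|1}). -/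
open Filter Topology

/-- Off `a`, `f x / g x` is the quotient of the slopes at `a`, so, unlike for
`HasDerivAt.lhopital_zero_nhds`, differentiability at `a` alone suffices. -/
theorem HasDerivAt.tendsto_div_of_eq_zero {𝕜 : Type*} [NontriviallyNormedField 𝕜]
    {f g : 𝕜 → 𝕜} {f' g' a : 𝕜} (hf : HasDerivAt f f' a) (hg : HasDerivAt g g' a)
    (hfa : f a = 0) (hga : g a = 0) (hg' : g' ≠ 0) :
    Tendsto (fun x => f x / g x) (𝓝[≠] a) (𝓝 (f' / g')) := by
  have hslope := (hasDerivAt_iff_tendsto_slope.mp hf).div (hasDerivAt_iff_tendsto_slope.mp hg) hg'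
  refine hslope.congr' ?_
  filter_upwards [self_mem_nhdsWithin] with x hx
  have hxa : x - a ≠ 0 := sub_ne_zero.mpr hx
  rw [Pi.div_apply, slope_def_field, slope_def_field, hfa, hga, sub_zero, sub_zero]
  exact div_div_div_cancel_right₀ hxa _ _

theorem stmt_6 (F1 F2 F12 F21 : ℝ → ℝ) (μ1 μ2 μ12 μ21 : ℝ)
    (hF1 : HasDerivAt F1 μ1 1) (hF2 : HasDerivAt F2 μ2 1)
    (hF12 : HasDerivAt F12 μ12 1) (hF21 : HasDerivAt F21 μ21 1)
    (hv1 : F1 1 = 1) (hv2 : F2 1 = 1) (hv12 : F12 1 = 1) (hv21 : F21 1 = 1)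
    (hμ : μ12 + μ21 ≠ 0) :
    Filter.Tendsto
      (fun s : ℝ => (F1 s - F2 s * F12 s) / (1 - F12 s * F21 s))
      (nhdsWithin 1 {(1 : ℝ)}ᶜ) (nhds ((μ2 - μ1 + μ12) / (μ12 + μ21))) := by
  have hnum : HasDerivAt (fun s => F1 s - F2 s * F12 s) (-(μ2 - μ1 + μ12)) 1 :=
    (hF1.sub (hF2.mul hF12)).congr_deriv (by rw [hv2, hv12]; ring)
  have hden : HasDerivAt (fun s => 1 - F12 s * F21 s) (-(μ12 + μ21)) 1 :=
    ((hasDerivAt_const (1 : ℝ) (1 : ℝ)).sub (hF12.mul hF21)).congr_deriv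
      (by rw [hv12, hv21]; ring)
  have hlim := hnum.tendsto_div_of_eq_zero hden (by simp [hv1, hv2, hv12])
    (by simp [hv12, hv21]) (neg_ne_zero.mpr hμ)
  rwa [neg_div_neg_eq] at hlim
end

section
/- Let F_1, F_2, F_3 and F_{i|j} (i ≠ j in {1,2,3}) be elements of a commutative ring (or field) with D := 1 - F_{1|2}F_{2|1} - F_{1|3}F_{3|1} - F_{2|3}F_{3|2} + F_{1|2}F_{2|3}F_{3|1} + F_{1|3}F_{3|2}F_{2|1} invertible. Define X_{1{2}} = (F_1 - F_2 F_{1|2})/(1 - F_{1|2}F_{2|1}), X_{3{2}} = (F_3 - F_2 F_{3|2})/(1 - F_{3|2}F_{2|3}), X_{1{2}|3} = (F_{1|3} - F_{2|3}F_{1|2})/(1 - F_{1|2}F_{2|1}), X_{3{2}|1} = (F_{3|1} - F_{2|1}F_{3|2})/(1 - F_{3|2}F_{2|3}). Then (X_{1{2}} - X_{3{2}} X_{1{2}|3})/(1 - X_{3{2}|1} X_{1{2}|3}) = (F_1(1 - F_{2|3}F_{3|2}) - F_2(F_{1|2} - F_{1|3}F_{3|2}) - F_3(F_{1|3} - F_{1|2}F_{2|3}))/D,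 provided all intermediate denominators are invertible. -/
theorem stmt_11 {K : Type*} [Field K]
    (F1 F2 F3 F12 F21 F13 F31 F23 F32 : K)
    (hD : 1 - F12 * F21 - F13 * F31 - F23 * F32 + F12 * F23 * F31 + F13 * F32 * F21 ≠ 0)
    (h12 : 1 - F12 * F21 ≠ 0) (h32 : 1 - F32 * F23 ≠ 0)
    (X12 X32 Y123 Y321 : K)
    (hX12 : X12 = (F1 - F2 * F12) / (1 - F12 * F21))
    (hX32 : X32 = (F3 - F2 * F32) / (1 - F32 * F23))
    (hY123 : Y123 = (F13 - F23 * F12) / (1 - F12 * F21))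
    (hY321 : Y321 = (F31 - F21 * F32) / (1 - F32 * F23))
    (hd : 1 - Y321 * Y123 ≠ 0) :
    (X12 - X32 * Y123) / (1 - Y321 * Y123) =
      (F1 * (1 - F23 * F32) - F2 * (F12 - F13 * F32) - F3 * (F13 - F12 * F23)) /
      (1 - F12 * F21 - F13 * F31 - F23 * F32 + F12 * F23 * F31 + F13 * F32 * F21) := by
  subst hX12 hX32 hY123 hY321
  rw [div_eq_div_iff hd hD]
  field_simp
  ring
end

section
/- Let μ_i and μ_{i|j} (i ≠ j ∈ {1,2,3}) be reals, and suppose F_i, F_{i|j} are twice-differentiable functions with F_i(1) = F_{i|j}(1) = 1, F_i'(1) = μ_i, F_{i|j}'(1) = μ_{i|j}. If the denominator below is nonzero, then the limit as s → 1 of (F_1(1−F_{2|3}F_{3|2}) − F_2(F_{1|2}−F_{1|3}F_{3|2}) − F_3(F_{1|3}−F_{1|2}F_{2|3}))/(1 − F_{1|2}F_{2|1} − F_{1|3}F_{3|1} − F_{2|3}F_{3|2} + F_{1|2}F_{2|3}F_{3|1} + F_{1|3}F_{3|2}F_{2|1}) equals (μ_1(μ_{2|3}+μ_{3|2}) + μ_2(μ_{1|2}−μ_{1|3}−μ_{3|2})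 + μ_3(μ_{1|3}−μ_{1|2}−μ_{2|3}) + μ_{2|3}μ_{3|2} − μ_{1|3}μ_{3|2} − μ_{1|2}μ_{2|3}) / (μ_{1|2}μ_{2|1} + μ_{1|3}μ_{3|1} + μ_{2|3}μ_{3|2} − μ_{1|2}μ_{2|3} − μ_{1|3}μ_{3|2} − μ_{2|1}μ_{1|3} − μ_{2|3}μ_{3|1} − μ_{3|1}μ_{1|2} − μ_{3|2}μ_{2|1}). -/
/-!
Numerator `N` and denominator `D` are polynomials in the nine generating functions, all equal
to `1` at `s = 1`. Both vanish at `1` together with their first derivatives, so two applications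
of L'Hôpital's rule give `N / D → N''(1) / D''(1)`. The second derivatives are read off from the
product rule applied to second-order jets, and equal `-2` times the numerator and the denominator
of the claimed limit.
-/

open Filter Topology

structure HasJet2At (f : ℝ → ℝ) (a b c x₀ : ℝ) : Prop where
  contDiff : ContDiff ℝ 2 f
  apply_eq : f x₀ = a
  hasDerivAt : HasDerivAt f b x₀
  hasDerivAt_deriv : HasDerivAt (deriv f) c x₀

namespace HasJet2At

variable {f g : ℝ → ℝ} {a b c a' b' c' x₀ : ℝ}

theorem of_contDiff (hf : ContDiff ℝ 2 f) (ha : f x₀ = a) (hb : deriv f x₀ = b) :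
    HasJet2At f a b (deriv (deriv f) x₀) x₀ := by
  have hf' : ContDiff ℝ 1 (deriv f) := hf.iterate_deriv' 1 1
  exact ⟨hf, ha, hb ▸ (hf.differentiable two_ne_zero x₀).hasDerivAt,
    (hf'.differentiable one_ne_zero x₀).hasDerivAt⟩

theorem differentiable (hf : HasJet2At f a b c x₀) : Differentiable ℝ f :=
  hf.contDiff.differentiable two_ne_zero

theorem const (a x₀ : ℝ) : HasJet2At (fun _ => a) a 0 0 x₀ :=
  ⟨contDiff_const, rfl, hasDerivAt_const x₀ a, by simpa using hasDerivAt_const x₀ (0 : ℝ)⟩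

theorem congr (hf : HasJet2At f a b c x₀) (ha : a = a') (hb : b = b') (hc : c = c') :
    HasJet2At f a' b' c' x₀ :=
  ha ▸ hb ▸ hc ▸ hf

theorem add (hf : HasJet2At f a b c x₀) (hg : HasJet2At g a' b' c' x₀) :
    HasJet2At (fun s => f s + g s) (a + a') (b + b') (c + c') x₀ := by
  have hderiv : deriv (fun s => f s + g s) = fun s => deriv f s + deriv g s :=
    funext fun s => deriv_fun_add (hf.differentiable s) (hg.differentiable s)
  refine ⟨hf.contDiff.add hg.contDiff, by rw [hf.apply_eq, hg.apply_eq],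
    hf.hasDerivAt.add hg.hasDerivAt, ?_⟩
  rw [hderiv]
  exact hf.hasDerivAt_deriv.add hg.hasDerivAt_deriv

theorem sub (hf : HasJet2At f a b c x₀) (hg : HasJet2At g a' b' c' x₀) :
    HasJet2At (fun s => f s - g s) (a - a') (b - b') (c - c') x₀ := by
  have hderiv : deriv (fun s => f s - g s) = fun s => deriv f s - deriv g s :=
    funext fun s => deriv_fun_sub (hf.differentiable s) (hg.differentiable s)
  refine ⟨hf.contDiff.sub hg.contDiff, by rw [hf.apply_eq, hg.apply_eq],
    hf.hasDerivAt.sub hg.hasDerivAt, ?_⟩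
  rw [hderiv]
  exact hf.hasDerivAt_deriv.sub hg.hasDerivAt_deriv

theorem mul (hf : HasJet2At f a b c x₀) (hg : HasJet2At g a' b' c' x₀) :
    HasJet2At (fun s => f s * g s) (a * a') (b * a' + a * b')
      (c * a' + 2 * b * b' + a * c') x₀ := by
  have hderiv : deriv (fun s => f s * g s) = fun s => deriv f s * g s + f s * deriv g s :=
    funext fun s => deriv_fun_mul (hf.differentiable s) (hg.differentiable s)
  have hf₁ : deriv f x₀ = b := hf.hasDerivAt.deriv
  have hg₁ : deriv g x₀ = b' := hg.hasDerivAt.deriv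
  refine ⟨hf.contDiff.mul hg.contDiff, by rw [hf.apply_eq, hg.apply_eq], ?_, ?_⟩
  · simpa only [hf.apply_eq, hg.apply_eq] using hf.hasDerivAt.fun_mul hg.hasDerivAt
  · rw [hderiv]
    have H := (hf.hasDerivAt_deriv.fun_mul hg.hasDerivAt).add
      (hf.hasDerivAt.fun_mul hg.hasDerivAt_deriv)
    rw [hf.apply_eq, hg.apply_eq, hf₁, hg₁] at H
    exact H.congr_deriv (by ring)

theorem tendsto_deriv_div_sub (hf : HasJet2At f a 0 c x₀) :
    Tendsto (fun s => deriv f s / (s - x₀)) (𝓝[≠] x₀) (𝓝 c) := by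
  refine hf.hasDerivAt_deriv.tendsto_slope.congr fun s => ?_
  rw [slope_def_field, hf.hasDerivAt.deriv, sub_zero]

theorem tendsto_nhdsNE (hf : HasJet2At f a b c x₀) : Tendsto f (𝓝[≠] x₀) (𝓝 a) :=
  hf.apply_eq ▸ hf.contDiff.continuous.continuousAt.tendsto.mono_left nhdsWithin_le_nhds

theorem tendsto_div (hf : HasJet2At f 0 0 c x₀) (hg : HasJet2At g 0 0 c' x₀) (hc' : c' ≠ 0) :
    Tendsto (fun s => f s / g s) (𝓝[≠] x₀) (𝓝 (c / c')) := by
  have hslope_f := hf.tendsto_deriv_div_sub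
  have hslope_g := hg.tendsto_deriv_div_sub
  have hg' : ∀ᶠ s in 𝓝[≠] x₀, deriv g s ≠ 0 := by
    filter_upwards [hslope_g.eventually_ne hc'] with s hs hzero
    exact hs (by rw [hzero, zero_div])
  have hdiv : Tendsto (fun s => deriv f s / deriv g s) (𝓝[≠] x₀) (𝓝 (c / c')) := by
    refine (hslope_f.div hslope_g hc').congr' ?_
    filter_upwards [self_mem_nhdsWithin] with s hs
    exact div_div_div_cancel_right₀ (sub_ne_zero.mpr hs) _ _
  exact deriv.lhopital_zero_nhdsNE (.of_forall hf.differentiable) hg'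
    hf.tendsto_nhdsNE hg.tendsto_nhdsNE hdiv

end HasJet2At

theorem stmt_13 (F1 F2 F3 F12 F21 F13 F31 F23 F32 : ℝ → ℝ)
    (μ1 μ2 μ3 μ12 μ21 μ13 μ31 μ23 μ32 : ℝ)
    (hc1 : ContDiff ℝ 2 F1) (hc2 : ContDiff ℝ 2 F2) (hc3 : ContDiff ℝ 2 F3)
    (hc12 : ContDiff ℝ 2 F12) (hc21 : ContDiff ℝ 2 F21)
    (hc13 : ContDiff ℝ 2 F13) (hc31 : ContDiff ℝ 2 F31)
    (hc23 : ContDiff ℝ 2 F23) (hc32 : ContDiff ℝ 2 F32)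
    (hv1 : F1 1 = 1) (hv2 : F2 1 = 1) (hv3 : F3 1 = 1)
    (hv12 : F12 1 = 1) (hv21 : F21 1 = 1) (hv13 : F13 1 = 1)
    (hv31 : F31 1 = 1) (hv23 : F23 1 = 1) (hv32 : F32 1 = 1)
    (hd1 : deriv F1 1 = μ1) (hd2 : deriv F2 1 = μ2) (hd3 : deriv F3 1 = μ3)
    (hd12 : deriv F12 1 = μ12) (hd21 : deriv F21 1 = μ21)
    (hd13 : deriv F13 1 = μ13) (hd31 : deriv F31 1 = μ31)
    (hd23 : deriv F23 1 = μ23) (hd32 : deriv F32 1 = μ32)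
    (hden : μ12 * μ21 + μ13 * μ31 + μ23 * μ32 - μ12 * μ23 - μ13 * μ32
      - μ21 * μ13 - μ23 * μ31 - μ31 * μ12 - μ32 * μ21 ≠ 0) :
    Filter.Tendsto
      (fun s : ℝ =>
        (F1 s * (1 - F23 s * F32 s) - F2 s * (F12 s - F13 s * F32 s)
          - F3 s * (F13 s - F12 s * F23 s)) /
        (1 - F12 s * F21 s - F13 s * F31 s - F23 s * F32 s
          + F12 s * F23 s * F31 s + F13 s * F32 s * F21 s))
      (nhdsWithin 1 {(1 : ℝ)}ᶜ)
      (nhds ((μ1 * (μ23 + μ32) + μ2 * (μ12 - μ13 - μ32) + μ3 * (μ13 - μ12 - μ23)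
        + μ23 * μ32 - μ13 * μ32 - μ12 * μ23) /
        (μ12 * μ21 + μ13 * μ31 + μ23 * μ32 - μ12 * μ23 - μ13 * μ32
          - μ21 * μ13 - μ23 * μ31 - μ31 * μ12 - μ32 * μ21))) := by
  have j1 := HasJet2At.of_contDiff hc1 hv1 hd1
  have j2 := HasJet2At.of_contDiff hc2 hv2 hd2
  have j3 := HasJet2At.of_contDiff hc3 hv3 hd3
  have j12 := HasJet2At.of_contDiff hc12 hv12 hd12
  have j21 := HasJet2At.of_contDiff hc21 hv21 hd21
  have j13 := HasJet2At.of_contDiff hc13 hv13 hd13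
  have j31 := HasJet2At.of_contDiff hc31 hv31 hd31
  have j23 := HasJet2At.of_contDiff hc23 hv23 hd23
  have j32 := HasJet2At.of_contDiff hc32 hv32 hd32
  have hN := ((j1.mul ((HasJet2At.const 1 1).sub (j23.mul j32))).sub (j2.mul (j12.sub (j13.mul j32)))).sub
    (j3.mul (j13.sub (j12.mul j23)))
  have hD := (((((HasJet2At.const 1 1).sub (j12.mul j21)).sub (j13.mul j31)).sub (j23.mul j32)).add
    ((j12.mul j23).mul j31)).add ((j13.mul j32).mul j21)
  rw [← mul_div_mul_left _ _ (by norm_num : (-2 : ℝ) ≠ 0)]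
  exact HasJet2At.tendsto_div (hN.congr (by norm_num) (by ring) (by ring))
    (hD.congr (by norm_num) (by ring) (by ring)) (mul_ne_zero (by norm_num) hden)
end
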